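/- arXiv:2311.11414 — 2 statements merged into one kernel-verified Lean document; each statement's English description precedes it below -/
import Mathlib

section
/- Let I be an ideal on ℕ which has the Baire property. Then there exists a family 𝒜 : Set (Set ℕ) of cardinality continuum (Cardinal.mk ↥𝒜 = Cardinal.continuum) such that every A ∈ 𝒜 satisfies A ∉ I, and any two distinct A, B ∈ 𝒜 are I-almost disjoint, i.e. A ∩ B ∈ I. -/
/-- `I` is an ideal on `ℕ`: closed under subsets and finite unions, contains singletons,
and does not contain `ℕ` itself. -/
def IsNatIdeal (I : Set (Set ℕ)) : Prop :=
  (∀ A B : Set ℕ, A ⊆ B → B ∈ I → A ∈ I) ∧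
  (∀ A B : Set ℕ, A ∈ I → B ∈ I → A ∪ B ∈ I) ∧
  (∀ n : ℕ, ({n} : Set ℕ) ∈ I) ∧
  (Set.univ : Set ℕ) ∉ I

/-- A set has the Baire property if it differs from an open set by a meagre set. -/
def HasBaireProperty {α : Type*} [TopologicalSpace α] (S : Set α) : Prop :=
  ∃ O : Set α, IsOpen O ∧ IsMeagre (symmDiff S O)

/-- An ideal on `ℕ` has the Baire property if the corresponding set of characteristic
functions has the Baire property in the Cantor space `ℕ → Bool`. -/
def IdealHasBaireProperty (I : Set (Set ℕ)) : Prop :=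
  HasBaireProperty {χ : ℕ → Bool | {n : ℕ | χ n = true} ∈ I}

open Set

namespace S18

/-! ### Cylinders in Cantor space -/

/-- cylinder: functions agreeing with `s` below `n` -/
def cyl (s : ℕ → Bool) (n : ℕ) : Set (ℕ → Bool) := {χ | ∀ i < n, χ i = s i}

lemma mem_cyl_iff (χ s : ℕ → Bool) (n : ℕ) : χ ∈ cyl s n ↔ ∀ i < n, χ i = s i := Iff.rfl

lemma self_mem_cyl (χ : ℕ → Bool) (n : ℕ) : χ ∈ cyl χ n := fun _ _ => rfl

lemma isOpen_cyl (s : ℕ → Bool) (n : ℕ) : IsOpen (cyl s n) := by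
  have h : cyl s n = ⋂ i : Fin n, (fun χ : ℕ → Bool => χ i) ⁻¹' {s i} := by
    ext χ
    simp only [cyl, mem_setOf_eq, mem_iInter, mem_preimage, mem_singleton_iff]
    exact ⟨fun h i => h i i.2, fun h i hi => h ⟨i, hi⟩⟩
  rw [h]
  exact isOpen_iInter_of_finite fun i =>
    (continuous_apply (i : ℕ)).isOpen_preimage _ (isOpen_discrete _)

lemma cyl_mono (s : ℕ → Bool) {m n : ℕ} (h : m ≤ n) : cyl s n ⊆ cyl s m :=
  fun _χ hχ i hi => hχ i (lt_of_lt_of_le hi h)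

lemma exists_cyl_subset {O : Set (ℕ → Bool)} (hO : IsOpen O) {χ : ℕ → Bool} (hχ : χ ∈ O) :
    ∃ n, cyl χ n ⊆ O := by
  have hm : O ∈ nhds χ := hO.mem_nhds hχ
  rw [nhds_pi, Filter.mem_pi] at hm
  obtain ⟨F, hF, t, ht, hsub⟩ := hm
  obtain ⟨n, hn⟩ := hF.bddAbove
  refine ⟨n + 1, fun ψ hψ => hsub fun i hi => ?_⟩
  have : ψ i = χ i := hψ i (Nat.lt_succ_of_le (hn hi))
  rw [this]
  exact mem_of_mem_nhds (by simpa using ht i)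

/-- a homeomorphism from a coordinatewise involution -/
def coordHomeo (f : ℕ → Bool → Bool) (hf : ∀ n b, f n (f n b) = b) :
    Homeomorph (ℕ → Bool) (ℕ → Bool) where
  toFun χ := fun n => f n (χ n)
  invFun χ := fun n => f n (χ n)
  left_inv χ := by funext n; exact hf n (χ n)
  right_inv χ := by funext n; exact hf n (χ n)
  continuous_toFun := continuous_pi fun n =>
    (continuous_of_discreteTopology (f := f n)).comp (continuous_apply n)
  continuous_invFun := continuous_pi fun n =>
    (continuous_of_discreteTopology (f := f n)).comp (continuous_apply n)

lemma coordHomeo_apply (f : ℕ → Bool → Bool) (hf : ∀ n b, f n (f n b) = b) (χ : ℕ → Bool) :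
    coordHomeo f hf χ = fun n => f n (χ n) := rfl

lemma isMeagre_preimage_homeo (h : Homeomorph (ℕ → Bool) (ℕ → Bool)) {s : Set (ℕ → Bool)}
    (hs : IsMeagre s) : IsMeagre (h ⁻¹' s) := by
  rw [isMeagre_iff_countable_union_isNowhereDense] at hs ⊢
  obtain ⟨S, hnd, hc, hsub⟩ := hs
  refine ⟨(fun t => h ⁻¹' t) '' S, ?_, hc.image _, ?_⟩
  · rintro _ ⟨t, ht, rfl⟩
    have := hnd t ht
    rw [IsNowhereDense] at this ⊢
    rw [(h.preimage_closure t).symm.trans rfl, ← h.preimage_interior, this, preimage_empty]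
  · intro χ hχ
    obtain ⟨t, ht, hmem⟩ := hsub hχ
    exact ⟨h ⁻¹' t, mem_image_of_mem _ ht, hmem⟩

lemma isMeagre_union {s t : Set (ℕ → Bool)} (hs : IsMeagre s) (ht : IsMeagre t) :
    IsMeagre (s ∪ t) := by
  rw [IsMeagre, Set.compl_union]; exact Filter.inter_mem hs ht

/-! ### Ideal basics -/

lemma Iio_mem {I : Set (Set ℕ)} (hI : IsNatIdeal I) (n : ℕ) : Set.Iio n ∈ I := by
  induction n with
  | zero => exact hI.1 _ {0} (by simp) (hI.2.2.1 0)
  | succ n ih =>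
    have : Set.Iio (n + 1) = Set.Iio n ∪ {n} := by
      ext i; simp [Nat.lt_succ_iff, Nat.le_iff_lt_or_eq]
    rw [this]
    exact hI.2.1 _ _ ih (hI.2.2.1 n)

lemma finite_mem {I : Set (Set ℕ)} (hI : IsNatIdeal I) {A : Set ℕ} (hA : A.Finite) : A ∈ I := by
  obtain ⟨n, hn⟩ := hA.bddAbove
  exact hI.1 _ (Set.Iio (n + 1)) (fun i hi => Nat.lt_succ_of_le (hn hi)) (Iio_mem hI (n + 1))

def Iset (I : Set (Set ℕ)) : Set (ℕ → Bool) := {χ | {n : ℕ | χ n = true} ∈ I}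

/-! ### An ideal with the Baire property is meagre -/

theorem meagre_Iset {I : Set (Set ℕ)} (hI : IsNatIdeal I)
    (hBP : HasBaireProperty (Iset I)) : IsMeagre (Iset I) := by
  obtain ⟨O, hO, hm⟩ := hBP
  by_cases hOe : O = ∅
  · subst hOe
    simpa [symmDiff_def] using hm
  obtain ⟨χ₀, hχ₀⟩ := nonempty_iff_ne_empty.mpr hOe
  obtain ⟨n, hcyl⟩ := exists_cyl_subset hO hχ₀
  set C := cyl χ₀ n with hC
  -- the flip-above-n involution
  set f : ℕ → Bool → Bool := fun i b => if i < n then b else !b with hfdef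
  have hf : ∀ i b, f i (f i b) = b := by
    intro i b; by_cases h : i < n <;> simp [hfdef, h]
  set h := coordHomeo f hf with hh
  -- C \ Iset is meagre
  have hM1 : IsMeagre (C \ Iset I) := by
    refine hm.mono fun χ hχ => ?_
    exact Or.inr ⟨hcyl hχ.1, hχ.2⟩
  -- C \ h⁻¹' Iset = h ⁻¹' (C \ Iset) is meagre
  have hCh : ∀ χ, h χ ∈ C ↔ χ ∈ C := by
    intro χ
    rw [mem_cyl_iff, mem_cyl_iff]
    constructor
    · intro hyp i hi
      have h1 := hyp i hi
      rw [coordHomeo_apply] at h1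
      simpa [hfdef, hi] using h1
    · intro hyp i hi
      rw [coordHomeo_apply]
      simpa [hfdef, hi] using hyp i hi
  have hM2 : IsMeagre (C \ h ⁻¹' (Iset I)) := by
    have : C \ h ⁻¹' (Iset I) = h ⁻¹' (C \ Iset I) := by
      ext χ
      simp only [mem_diff, mem_preimage]
      rw [hCh χ]
    rw [this]
    exact isMeagre_preimage_homeo h hM1
  -- C is open nonempty, so not covered by a meagre set
  have hdense : Dense ((C \ Iset I) ∪ (C \ h ⁻¹' (Iset I)))ᶜ :=
    dense_of_mem_residual (isMeagre_union hM1 hM2)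
  obtain ⟨χ, hχC, hχc⟩ : ∃ χ, χ ∈ C ∧ χ ∈ ((C \ Iset I) ∪ (C \ h ⁻¹' (Iset I)))ᶜ := by
    have := hdense.inter_open_nonempty C (isOpen_cyl _ _) ⟨χ₀, self_mem_cyl _ _⟩
    obtain ⟨χ, h1, h2⟩ := this
    exact ⟨χ, h1, h2⟩
  simp only [compl_union, mem_inter_iff, mem_compl_iff, mem_diff, not_and, not_not] at hχc
  have hA : {i | χ i = true} ∈ I := hχc.1 hχC
  have hB : {i | h χ i = true} ∈ I := hχc.2 hχC
  -- contradiction: A ∪ B ∪ [0,n) = univ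
  exfalso
  apply hI.2.2.2
  have hfin : {i : ℕ | i < n} ∈ I := Iio_mem hI n
  have : (Set.univ : Set ℕ) = {i | χ i = true} ∪ ({i | h χ i = true} ∪ {i | i < n}) := by
    ext i
    simp only [mem_univ, mem_union, mem_setOf_eq, true_iff]
    by_cases hi : i < n
    · tauto
    · rw [coordHomeo_apply, hfdef]
      simp only [hi, if_false]
      cases hb : χ i <;> simp [hb, hi]
  rw [this]
  exact hI.2.1 _ _ hA (hI.2.1 _ _ hB hfin)

/-! ### Covering a meagre set by increasing closed nowhere dense sets -/

lemma nwd_union {X : Type*} [TopologicalSpace X] {s t : Set X}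
    (hsc : IsClosed s) (hsn : IsNowhereDense s) (htc : IsClosed t) (htn : IsNowhereDense t) :
    IsClosed (s ∪ t) ∧ IsNowhereDense (s ∪ t) := by
  have hs := isClosed_isNowhereDense_iff_compl.mp ⟨hsc, hsn⟩
  have ht := isClosed_isNowhereDense_iff_compl.mp ⟨htc, htn⟩
  rw [isClosed_isNowhereDense_iff_compl, compl_union]
  exact ⟨hs.1.inter ht.1, hs.2.inter_of_isOpen_left ht.2 hs.1⟩

/-- a meagre set is covered by an increasing sequence of closed nowhere dense sets -/
lemma meagre_cover {X : Type*} [TopologicalSpace X] {S : Set X} (hS : IsMeagre S) :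
    ∃ F : ℕ → Set X, (∀ k, IsClosed (F k)) ∧ (∀ k, IsNowhereDense (F k)) ∧
      Monotone F ∧ S ⊆ ⋃ k, F k := by
  rw [isMeagre_iff_countable_union_isNowhereDense] at hS
  obtain ⟨𝒮, hnd, hc, hsub⟩ := hS
  have hc' : (insert (∅ : Set X) 𝒮).Countable := hc.insert _
  obtain ⟨g, hg⟩ := hc'.exists_eq_range ⟨∅, mem_insert _ _⟩
  have hgnd : ∀ k, IsNowhereDense (g k) := by
    intro k
    have : g k ∈ insert (∅ : Set X) 𝒮 := hg ▸ mem_range_self k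
    rcases this with h | h
    · rw [h]; exact isNowhereDense_empty
    · exact hnd _ h
  -- increasing closed covers
  set G : ℕ → Set X := fun k => Nat.rec (closure (g 0))
    (fun k Gk => Gk ∪ closure (g (k + 1))) k with hG
  have hGk : ∀ k, IsClosed (G k) ∧ IsNowhereDense (G k) := by
    intro k
    induction k with
    | zero => exact ⟨isClosed_closure, (hgnd 0).closure⟩
    | succ k ih => exact nwd_union ih.1 ih.2 isClosed_closure ((hgnd (k+1)).closure)
  have hGmono : Monotone G := by
    apply monotone_nat_of_le_succ
    intro k
    exact subset_union_left
  refine ⟨G, fun k => (hGk k).1, fun k => (hGk k).2, hGmono, ?_⟩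
  intro χ hχ
  obtain ⟨u, hu𝒮, hχu⟩ := hsub hχ
  have : u ∈ range g := by rw [← hg]; exact mem_insert_of_mem _ hu𝒮
  obtain ⟨k, rfl⟩ := this
  have hsub2 : g k ⊆ G k := by
    cases k with
    | zero => exact subset_closure
    | succ k => exact subset_trans subset_closure subset_union_right
  exact mem_iUnion.mpr ⟨k, hsub2 hχu⟩

/-! ### The Talagrand interval partition -/

/-- escape a single closed nowhere dense set from any finite condition -/
lemma escape {F : Set (ℕ → Bool)} (hFc : IsClosed F) (hFn : IsNowhereDense F)
    (s : ℕ → Bool) (n : ℕ) :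
    ∃ m, n ≤ m ∧ ∃ t : ℕ → Bool, (∀ i < n, t i = s i) ∧ cyl t m ∩ F = ∅ := by
  have hint : interior F = ∅ := (hFc.isNowhereDense_iff).mp hFn
  have hnotsub : ¬ cyl s n ⊆ F := by
    intro hsub
    have : cyl s n ⊆ interior F := (isOpen_cyl s n).subset_interior_iff.mpr hsub
    rw [hint] at this
    exact this (self_mem_cyl s n)
  obtain ⟨χ, hχc, hχF⟩ := not_subset.mp hnotsub
  obtain ⟨m', hm'⟩ := exists_cyl_subset hFc.isOpen_compl (show χ ∈ Fᶜ from hχF)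
  refine ⟨max n m', le_max_left _ _, χ, fun i hi => (mem_cyl_iff χ s n).mp hχc i hi, ?_⟩
  rw [eq_empty_iff_forall_notMem]
  intro ψ hψ
  exact hm' (cyl_mono χ (le_max_right n m') hψ.1) hψ.2

/-- uniform escape: one length works for all conditions of length `n` -/
lemma uniform_escape {F : Set (ℕ → Bool)} (hFc : IsClosed F) (hFn : IsNowhereDense F) (n : ℕ) :
    ∃ m, n < m ∧ ∀ s : ℕ → Bool, ∃ t : ℕ → Bool,
      (∀ i < n, t i = s i) ∧ cyl t m ∩ F = ∅ := by
  have H : ∀ σ : Fin n → Bool, ∃ m, n ≤ m ∧ ∃ t : ℕ → Bool,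
      (∀ i < n, t i = (fun j => if h : j < n then σ ⟨j, h⟩ else false) i) ∧
      cyl t m ∩ F = ∅ :=
    fun σ => escape hFc hFn _ n
  choose mf hmf tf htf hdisj using H
  refine ⟨(n + 1) ⊔ Finset.univ.sup mf, ?_, ?_⟩
  · exact lt_of_lt_of_le (Nat.lt_succ_self n) (le_max_left _ _)
  · intro s
    set σ : Fin n → Bool := fun i => s i with hσ
    refine ⟨tf σ, ?_, ?_⟩
    · intro i hi
      have := htf σ i hi
      simpa [hi] using this
    · rw [eq_empty_iff_forall_notMem]
      intro ψ hψ
      have hle : mf σ ≤ (n + 1) ⊔ Finset.univ.sup mf :=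
        le_trans (Finset.le_sup (Finset.mem_univ σ)) (le_max_right _ _)
      have : ψ ∈ cyl (tf σ) (mf σ) ∩ F := ⟨cyl_mono _ hle hψ.1, hψ.2⟩
      rw [hdisj σ] at this
      exact this

/-- The interval partition: given a sequence of closed nwd sets, there is a strictly
increasing sequence `ν` with the escape property on each block. -/
lemma exists_partition {F : ℕ → Set (ℕ → Bool)} (hFc : ∀ k, IsClosed (F k))
    (hFn : ∀ k, IsNowhereDense (F k)) :
    ∃ ν : ℕ → ℕ, StrictMono ν ∧ ∀ k (s : ℕ → Bool), ∃ t : ℕ → Bool,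
      (∀ i < ν k, t i = s i) ∧ cyl t (ν (k + 1)) ∩ F k = ∅ := by
  have H : ∀ k n, ∃ m, n < m ∧ ∀ s : ℕ → Bool, ∃ t : ℕ → Bool,
      (∀ i < n, t i = s i) ∧ cyl t m ∩ F k = ∅ :=
    fun k n => uniform_escape (hFc k) (hFn k) n
  choose m hm hesc using H
  refine ⟨fun k => Nat.rec 0 (fun k nk => m k nk) k, ?_, ?_⟩
  · exact strictMono_nat_of_lt_succ fun k => hm k _
  · intro k s
    exact hesc k _ s

/-- Key lemma: if `A` contains the interval `[ν k, ν (k+1))` for infinitely many `k`,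
then some subset of `A` has characteristic function escaping all the `F k`. -/
lemma key_escape {F : ℕ → Set (ℕ → Bool)} (hmono : Monotone F)
    {ν : ℕ → ℕ} (hν : StrictMono ν)
    (hesc : ∀ k (s : ℕ → Bool), ∃ t : ℕ → Bool,
      (∀ i < ν k, t i = s i) ∧ cyl t (ν (k + 1)) ∩ F k = ∅)
    {A : Set ℕ} (hA : {k : ℕ | Set.Ico (ν k) (ν (k + 1)) ⊆ A}.Infinite) :
    ∃ χ : ℕ → Bool, {j | χ j = true} ⊆ A ∧ ∀ r, χ ∉ F r := by
  classical
  choose t ht hdisj using hesc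
  set p : ℕ → Prop := fun k => Set.Ico (ν k) (ν (k + 1)) ⊆ A with hp
  set κ : ℕ → ℕ := Nat.nth p with hκ
  have hκmono : StrictMono κ := Nat.nth_strictMono hA
  have hκmem : ∀ i, Set.Ico (ν (κ i)) (ν (κ i + 1)) ⊆ A := fun i =>
    Nat.nth_mem_of_infinite hA i
  -- the recursive sequence of finite conditions
  set T : ℕ → (ℕ → Bool) := fun i => Nat.rec (fun _ => false)
    (fun i Ti => fun j => if j < ν (κ i + 1) then t (κ i) Ti j else false) i with hT
  have hTsucc : ∀ i j, T (i + 1) j = if j < ν (κ i + 1) then t (κ i) (T i) j else false :=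
    fun i j => rfl
  -- (P1) agreement below ν (κ i)
  have P1 : ∀ i j, j < ν (κ i) → T (i + 1) j = T i j := by
    intro i j hj
    rw [hTsucc]
    have h2 : j < ν (κ i + 1) := lt_trans hj (hν (Nat.lt_succ_self _))
    rw [if_pos h2]
    exact ht (κ i) (T i) j hj
  -- stabilization
  have stab : ∀ i i', i ≤ i' → ∀ j, j < ν (κ i) → T i' j = T i j := by
    intro i i' hii'
    induction i' with
    | zero => intro j hj; cases Nat.le_zero.mp hii'; rfl
    | succ i' ih =>
      intro j hj
      rcases Nat.lt_succ_iff_lt_or_eq.mp (Nat.lt_succ_of_le hii') with h | h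
      · have hle : i ≤ i' := Nat.lt_succ_iff.mp h
        have : j < ν (κ i') := lt_of_lt_of_le hj (hν.monotone (hκmono.monotone hle))
        rw [P1 i' j this]
        exact ih hle j hj
      · subst h; rfl
  -- the limit function
  set χB : ℕ → Bool := fun j => T (j + 1) j with hχB
  have hjlt : ∀ j : ℕ, j < ν (κ (j + 1)) := by
    intro j
    calc j < j + 1 := Nat.lt_succ_self j
    _ ≤ κ (j + 1) := hκmono.le_apply
    _ ≤ ν (κ (j + 1)) := hν.le_apply
  have hstabB : ∀ j i', j + 1 ≤ i' → T i' j = χB j := by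
    intro j i' h
    exact stab (j + 1) i' h j (hjlt j)
  -- χB lies in each escape cylinder
  have hcylB : ∀ i, χB ∈ cyl (t (κ i) (T i)) (ν (κ i + 1)) := by
    intro i
    rw [mem_cyl_iff]
    intro j hj
    have h1 : j < ν (κ (i + 1)) :=
      lt_of_lt_of_le hj (hν.monotone (hκmono (Nat.lt_succ_self i)))
    have h2 : T (i + 1) j = χB j := by
      rcases le_total (i + 1) (j + 1) with h | h
      · have := stab (i + 1) (j + 1) h j h1
        rw [hχB]; exact this.symm
      · exact hstabB j (i + 1) h
    rw [← h2, hTsucc, if_pos hj]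
  have hnotF : ∀ i, χB ∉ F (κ i) := by
    intro i hmem
    have : χB ∈ cyl (t (κ i) (T i)) (ν (κ i + 1)) ∩ F (κ i) := ⟨hcylB i, hmem⟩
    rw [hdisj] at this
    exact this
  -- support of T is inside A
  have hsupp : ∀ i j, T i j = true → j ∈ A := by
    intro i
    induction i with
    | zero => intro j h; exact absurd h (by simp [hT])
    | succ i ih =>
      intro j h
      rw [hTsucc] at h
      by_cases h1 : j < ν (κ i + 1)
      · rw [if_pos h1] at h
        by_cases h2 : j < ν (κ i)
        · exact ih j (by rw [← ht (κ i) (T i) j h2]; exact h)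
        · exact hκmem i ⟨Nat.le_of_not_lt h2, h1⟩
      · rw [if_neg h1] at h; exact absurd h (by simp)
  refine ⟨χB, ?_, ?_⟩
  · intro j hj
    exact hsupp (j + 1) j hj
  · intro r hmem
    have : χB ∈ F (κ r) := hmono hκmono.le_apply hmem
    exact hnotF r this

/-! ### The almost disjoint family of branches -/

/-- the branch set of `x` : codes of initial segments -/
def branch (x : ℕ → Bool) : Set ℕ :=
  Set.range (fun n => Encodable.encode ((List.range n).map x))

lemma branch_inj_enum (x : ℕ → Bool) :
    Function.Injective (fun n => Encodable.encode ((List.range n).map x)) := by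
  intro n m h
  have := Encodable.encode_injective h
  have hl := congrArg List.length this
  simpa using hl

lemma branch_infinite (x : ℕ → Bool) : (branch x).Infinite :=
  Set.infinite_range_of_injective (branch_inj_enum x)

lemma branch_inter_finite {x y : ℕ → Bool} (hxy : x ≠ y) :
    (branch x ∩ branch y).Finite := by
  have hex : ∃ d, x d ≠ y d := by
    by_contra h
    push_neg at h
    exact hxy (funext h)
  set d := Nat.find hex with hd
  apply Set.Finite.subset (Set.finite_Iic (Encodable.encode ((List.range d).map x)) |>.image
    (fun n => Encodable.encode ((List.range n).map x)) |>.union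
    ((Set.finite_Iic d).image (fun n => Encodable.encode ((List.range n).map x))))
  · rintro a ⟨⟨n, rfl⟩, ⟨m, hm⟩⟩
    refine Or.inr ⟨n, ?_, rfl⟩
    simp only [Set.mem_Iic]
    by_contra hn
    push_neg at hn
    have heq : (List.range n).map x = (List.range m).map y := Encodable.encode_injective hm.symm
    have hnm : n = m := by
      have := congrArg List.length heq
      simpa using this
    subst hnm
    have : ∀ i < n, x i = y i := by
      intro i hi
      have h1 : ((List.range n).map x)[i]? = ((List.range n).map y)[i]? := by rw [heq]
      rw [List.getElem?_map, List.getElem?_map] at h1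
      simpa [List.getElem?_range, hi] using h1
    exact Nat.find_spec hex (this d (lt_of_lt_of_le (Nat.lt_succ_self d) hn))

lemma branch_diff_nonempty {x y : ℕ → Bool} (hxy : x ≠ y) :
    ∃ k, k ∈ branch x ∧ k ∉ branch y := by
  have hinf := branch_infinite x
  have hfin := branch_inter_finite hxy
  have : (branch x \ branch y).Infinite := by
    have hsub : branch x ⊆ (branch x \ branch y) ∪ (branch x ∩ branch y) := by
      intro a ha
      by_cases h : a ∈ branch y
      · exact Or.inr ⟨ha, h⟩
      · exact Or.inl ⟨ha, h⟩
    intro hcon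
    exact hinf (Set.Finite.subset (hcon.union hfin) hsub)
  obtain ⟨k, hk⟩ := this.nonempty
  exact ⟨k, hk.1, hk.2⟩

end S18

/-- If an ideal `I` on `ℕ` has the Baire property, then there is a family of
continuum many `I`-positive, pairwise `I`-almost disjoint subsets of `ℕ`. -/
theorem stmt18 (I : Set (Set ℕ)) (hI : IsNatIdeal I) (hBP : IdealHasBaireProperty I) :
    ∃ 𝒜 : Set (Set ℕ), Cardinal.mk ↥𝒜 = Cardinal.continuum ∧
      (∀ A ∈ 𝒜, A ∉ I) ∧
      (∀ A ∈ 𝒜, ∀ B ∈ 𝒜, A ≠ B → A ∩ B ∈ I) := by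
  have hmeagre : IsMeagre (S18.Iset I) := S18.meagre_Iset hI hBP
  obtain ⟨F, hFc, hFn, hFmono, hcover⟩ := S18.meagre_cover hmeagre
  obtain ⟨ν, hν, hesc⟩ := S18.exists_partition hFc hFn
  -- blocks
  set E : ℕ → Set ℕ := fun k => Set.Ico (ν k) (ν (k + 1)) with hE
  have hblock : ∀ {k k' : ℕ} {j : ℕ}, j ∈ E k → j ∈ E k' → k = k' := by
    intro k k' j hj hj'
    by_contra hne
    rcases Nat.lt_or_ge k k' with h | h
    · exact absurd (lt_of_lt_of_le hj.2 (le_trans (hν.monotone h) hj'.1)) (lt_irrefl _)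
    · rcases Nat.lt_or_ge k' k with h2 | h2
      · exact absurd (lt_of_lt_of_le hj'.2 (le_trans (hν.monotone h2) hj.1)) (lt_irrefl _)
      · exact hne (le_antisymm h2 h)
  set Bset : (ℕ → Bool) → Set ℕ := fun x => {j | ∃ k ∈ S18.branch x, j ∈ E k} with hBset
  -- B is I-positive
  have hBpos : ∀ x, Bset x ∉ I := by
    intro x hmem
    have hinf : {k : ℕ | Set.Ico (ν k) (ν (k + 1)) ⊆ Bset x}.Infinite := by
      apply (S18.branch_infinite x).mono
      intro k hk j hj
      exact ⟨k, hk, hj⟩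
    obtain ⟨χ, hsub, hnF⟩ := S18.key_escape hFmono hν hesc hinf
    have h1 : {j | χ j = true} ∈ I := hI.1 _ _ hsub hmem
    have h2 : χ ∈ ⋃ k, F k := hcover h1
    obtain ⟨_, ⟨k, rfl⟩, hk⟩ := h2
    exact hnF k hk
  -- B is injective
  have hinj : Function.Injective Bset := by
    intro x y h
    by_contra hxy
    obtain ⟨k, hkx, hky⟩ := S18.branch_diff_nonempty hxy
    have h1 : ν k ∈ Bset x := ⟨k, hkx, le_refl _, hν (Nat.lt_succ_self k)⟩
    rw [h] at h1
    obtain ⟨k', hk', hj⟩ := h1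
    have : k' = k := hblock hj ⟨le_refl _, hν (Nat.lt_succ_self k)⟩
    subst this
    exact hky hk'
  -- almost disjointness
  have hAD : ∀ x y : ℕ → Bool, x ≠ y → Bset x ∩ Bset y ∈ I := by
    intro x y hxy
    have hsub : Bset x ∩ Bset y ⊆ ⋃ k ∈ S18.branch x ∩ S18.branch y, E k := by
      rintro j ⟨⟨k, hk, hj⟩, ⟨k', hk', hj'⟩⟩
      have : k' = k := hblock hj' hj
      subst this
      exact Set.mem_biUnion ⟨hk, hk'⟩ hj
    have hfin : (⋃ k ∈ S18.branch x ∩ S18.branch y, E k).Finite :=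
      (S18.branch_inter_finite hxy).biUnion fun k _ => Set.finite_Ico _ _
    exact hI.1 _ _ hsub (S18.finite_mem hI hfin)
  refine ⟨Set.range Bset, ?_, ?_, ?_⟩
  · rw [Cardinal.mk_range_eq _ hinj, Cardinal.mk_arrow]
    simp [Cardinal.two_power_aleph0]
  · rintro A ⟨x, rfl⟩
    exact hBpos x
  · rintro A ⟨x, rfl⟩ B ⟨y, rfl⟩ hne
    exact hAD x y fun h => hne (by rw [h])
end

section
/- Let I be an ideal on ℕ which has the hereditary Baire property. Then for every X ⊆ ℕ with X ∉ I there exists a family A : List Bool → Set ℕ of subsets of X such that A [] = X, A s ∉ I for every s, A (s ++ [i]) ⊆ A s for each i : Bool, and A (s ++ [false]) ∩ A (s ++ [true]) = ∅ for every s. -/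
set_option linter.unnecessarySeqFocus false

/-- An ideal on `ℕ` has the hereditary Baire property if its restriction to any `X ∉ I`
has the Baire property in the Cantor space `↥X → Bool`. -/
def IdealHasHereditaryBaireProperty (I : Set (Set ℕ)) : Prop :=
  ∀ X : Set ℕ, X ∉ I →
    HasBaireProperty {χ : ↥X → Bool | {n : ℕ | ∃ h : n ∈ X, χ ⟨n, h⟩ = true} ∈ I}

/-- Preimage of a meagre set under a continuous involution is meagre. -/
lemma meagre_preimage_invol {α : Type*} [TopologicalSpace α] {f : α → α}
    (hc : Continuous f) (hinv : ∀ x, f (f x) = x) {s : Set α} (hs : IsMeagre s) :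
    IsMeagre (f ⁻¹' s) := by
  refine hs.preimage_of_isOpenMap hc ?_
  intro U hU
  have himg : f '' U = f ⁻¹' U := by
    ext x
    constructor
    · rintro ⟨y, hy, rfl⟩; simpa [hinv] using hy
    · intro hx; exact ⟨f x, hx, hinv x⟩
  rw [himg]
  exact hU.preimage hc

lemma union_meagre {α : Type*} [TopologicalSpace α] {s t : Set α}
    (hs : IsMeagre s) (ht : IsMeagre t) : IsMeagre (s ∪ t) := by
  rw [IsMeagre, Set.compl_union]; exact Filter.inter_mem hs ht

lemma finite_iUnion_meagre {α ι : Type*} [TopologicalSpace α] [Finite ι] {s : ι → Set α}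
    (hs : ∀ i, IsMeagre (s i)) : IsMeagre (⋃ i, s i) := by
  rw [IsMeagre, Set.compl_iUnion]; exact Filter.iInter_mem.2 hs

lemma natIdeal_finite_mem {I : Set (Set ℕ)} (hI : IsNatIdeal I) {s : Set ℕ}
    (hs : s.Finite) : s ∈ I := by
  have h : ∀ t : Finset ℕ, (↑t : Set ℕ) ∈ I := by
    intro t
    induction t using Finset.induction_on with
    | empty => simpa using hI.1 ∅ {0} (Set.empty_subset _) (hI.2.2.1 0)
    | @insert a t' _ ih =>
      rw [Finset.coe_insert]
      have heq : (insert a (↑t' : Set ℕ)) = {a} ∪ ↑t' := by ext; simp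
      rw [heq]
      exact hI.2.1 _ _ (hI.2.2.1 a) ih
  have := h hs.toFinset
  rwa [Set.Finite.coe_toFinset] at this

/-- The splitting lemma: every `I`-positive set splits into two `I`-positive pieces. -/
lemma split_lemma (I : Set (Set ℕ)) (hI : IsNatIdeal I)
    (hBP : IdealHasHereditaryBaireProperty I) (X : Set ℕ) (hX : X ∉ I) :
    ∃ Y, Y ⊆ X ∧ Y ∉ I ∧ X \ Y ∉ I := by
  by_contra hcon
  push_neg at hcon
  -- hcon : ∀ Y, Y ⊆ X → Y ∉ I → X \ Y ∈ I
  set T : (↥X → Bool) → Set ℕ := fun χ => {n : ℕ | ∃ h : n ∈ X, χ ⟨n, h⟩ = true} with hTdef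
  set S : Set (↥X → Bool) := {χ | T χ ∈ I} with hSdef
  have hTsub : ∀ χ, T χ ⊆ X := by rintro χ n ⟨h, _⟩; exact h
  have hmax : ∀ χ : ↥X → Bool, (T χ ∈ I ↔ X \ T χ ∉ I) := by
    intro χ
    constructor
    · intro h1 h2
      have : X ⊆ T χ ∪ (X \ T χ) := by
        intro n hn
        by_cases hT : n ∈ T χ
        · exact Or.inl hT
        · exact Or.inr ⟨hn, hT⟩
      exact hX (hI.1 X _ this (hI.2.1 _ _ h1 h2))
    · intro h2
      by_contra h1
      exact h2 (hcon (T χ) (hTsub χ) h1)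
  have hflipT : ∀ χ : ↥X → Bool, T (fun i => !(χ i)) = X \ T χ := by
    intro χ
    ext n
    constructor
    · rintro ⟨h, hb⟩
      refine ⟨h, ?_⟩
      rintro ⟨h', hb'⟩
      have heq : (⟨n, h'⟩ : ↥X) = ⟨n, h⟩ := rfl
      rw [heq] at hb'
      simp [hb'] at hb
    · rintro ⟨h, hnb⟩
      refine ⟨h, ?_⟩
      simp only [Bool.not_eq_true']
      by_contra hb
      exact hnb ⟨h, by simpa using hb⟩
  set flipm : (↥X → Bool) → (↥X → Bool) := fun χ i => !(χ i) with hflipdef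
  have hflipcont : Continuous flipm :=
    continuous_pi fun i => Continuous.comp
      (continuous_of_discreteTopology : Continuous fun b : Bool => !b) (continuous_apply i)
  have hflipinv : ∀ χ, flipm (flipm χ) = χ := by
    intro χ; funext i; simp [hflipdef]
  have hpre : flipm ⁻¹' S = Sᶜ := by
    ext χ
    simp only [Set.mem_preimage, Set.mem_compl_iff, hSdef, Set.mem_setOf_eq]
    rw [show T (flipm χ) = X \ T χ from hflipT χ]
    constructor
    · intro h hT; exact (hmax χ).1 hT h
    · intro h
      by_contra h2
      exact h ((hmax χ).2 h2)
  -- the space is a nonempty Baire space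
  have hNE : Nonempty (↥X → Bool) := ⟨fun _ => true⟩
  have hnotmeagre : ¬ IsMeagre (Set.univ : Set (↥X → Bool)) := by
    intro h
    rw [IsMeagre, Set.compl_univ] at h
    exact (dense_of_mem_residual h).nonempty.ne_empty rfl
  obtain ⟨O, hO, hM⟩ := hBP X hX
  have hSmeagre : IsMeagre S ∨ IsMeagre Sᶜ := by
    rcases Set.eq_empty_or_nonempty O with hOe | ⟨χ₀, hχ₀⟩
    · left
      subst hOe
      simpa [symmDiff] using hM
    · right
      obtain ⟨F, u, hu, hsub⟩ := isOpen_pi_iff.1 hO χ₀ hχ₀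
      set C : Set (↥X → Bool) := {χ | ∀ i ∈ F, χ i = χ₀ i} with hCdef
      have hCO : C ⊆ O := by
        intro χ hχ
        apply hsub
        intro i hi
        rw [hχ i hi]
        exact (hu i hi).2
      have hCS : IsMeagre (C \ S) := by
        refine hM.mono ?_
        intro χ ⟨hχC, hχS⟩
        exact Or.inr ⟨hCO hχC, hχS⟩
      -- the finite set of coordinates, as a subset of ℕ, is in I
      set K : Set ℕ := (fun (i : ↥X) => (i : ℕ)) '' (↑F : Set ↥X) with hKdef
      have hKI : K ∈ I := natIdeal_finite_mem hI (F.finite_toSet.image _)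
      -- the swap maps
      set g : (↥X → Bool) → (↥X → Bool) → (↥X → Bool) :=
        fun v χ i => if i ∈ F then xor (χ i) (xor (χ₀ i) (v i)) else χ i with hgdef
      have hgcont : ∀ v, Continuous (g v) := fun v =>
        continuous_pi fun i => Continuous.comp
          (continuous_of_discreteTopology :
            Continuous fun b : Bool => if i ∈ F then xor b (xor (χ₀ i) (v i)) else b)
          (continuous_apply i)
      have hginv : ∀ v χ, g v (g v χ) = χ := by
        intro v χ; funext i
        by_cases hi : i ∈ F <;> simp only [hgdef, hi, if_pos, if_neg, if_true, if_false] <;>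
          first
            | rfl
            | (cases χ i <;> cases χ₀ i <;> cases v i <;> rfl)
      -- g v preserves S
      have hgS : ∀ v χ, (g v χ ∈ S ↔ χ ∈ S) := by
        intro v χ
        have key : ∀ (ψ φ : ↥X → Bool), (∀ i : ↥X, i ∉ F → ψ i = φ i) →
            T ψ ⊆ T φ ∪ K := by
          intro ψ φ hψφ n hn
          obtain ⟨h, hb⟩ := hn
          by_cases hi : (⟨n, h⟩ : ↥X) ∈ F
          · exact Or.inr ⟨⟨n, h⟩, hi, rfl⟩
          · exact Or.inl ⟨h, by rw [← hψφ _ hi]; exact hb⟩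
        have h1 : ∀ i : ↥X, i ∉ F → g v χ i = χ i := by
          intro i hi; simp [hgdef, hi]
        have h2 : ∀ i : ↥X, i ∉ F → χ i = g v χ i := fun i hi => (h1 i hi).symm
        constructor
        · intro h
          exact hI.1 _ _ (key χ (g v χ) h2) (hI.2.1 _ _ h hKI)
        · intro h
          exact hI.1 _ _ (key (g v χ) χ h1) (hI.2.1 _ _ h hKI)
      have hkey : ∀ (v χ : ↥X → Bool), (∀ i ∈ F, v i = χ i) → χ ∉ S → g v χ ∈ C \ S := by
        intro v χ hv hχ
        refine ⟨?_, fun hgS' => hχ ((hgS v χ).1 hgS')⟩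
        intro i hi
        simp only [hgdef, if_pos hi, hv i hi]
        cases χ i <;> cases χ₀ i <;> rfl
      -- cover Sᶜ by finitely many preimages of C \ S
      have hcover : Sᶜ ⊆ ⋃ w : ↥(↑F : Set ↥X) → Bool,
          (g (fun i => if h : i ∈ F then w ⟨i, h⟩ else false)) ⁻¹' (C \ S) := by
        intro χ hχ
        refine Set.mem_iUnion.2 ⟨fun j => χ j.1, ?_⟩
        exact hkey _ χ (fun i hi => by simp [hi]) hχ
      refine (finite_iUnion_meagre ?_).mono hcover
      intro w
      exact meagre_preimage_invol (hgcont _) (hginv _) hCS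
  -- either way, both S and Sᶜ are meagre, contradicting Baire
  have hboth : IsMeagre S ∧ IsMeagre Sᶜ := by
    rcases hSmeagre with h | h
    · refine ⟨h, ?_⟩
      rw [← hpre]
      exact meagre_preimage_invol hflipcont hflipinv h
    · refine ⟨?_, h⟩
      have h2 : flipm ⁻¹' Sᶜ = S := by
        rw [← hpre]
        ext χ
        simp [hflipinv]
      rw [← h2]
      exact meagre_preimage_invol hflipcont hflipinv h
  have huniv : IsMeagre (Set.univ : Set (↥X → Bool)) := by
    have := union_meagre hboth.1 hboth.2
    simpa using this
  exact hnotmeagre huniv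

/-- If an ideal `I` on `ℕ` has the hereditary Baire property, then every
`X ∉ I` carries a Cantor scheme of `I`-positive subsets of `X`. -/
theorem stmt19 (I : Set (Set ℕ)) (hI : IsNatIdeal I)
    (hBP : IdealHasHereditaryBaireProperty I) :
    ∀ X : Set ℕ, X ∉ I →
      ∃ A : List Bool → Set ℕ,
        A [] = X ∧ (∀ s, A s ⊆ X) ∧ (∀ s, A s ∉ I) ∧
        (∀ (s : List Bool) (i : Bool), A (s ++ [i]) ⊆ A s) ∧
        (∀ s : List Bool, A (s ++ [false]) ∩ A (s ++ [true]) = ∅) := by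
  intro X hX
  classical
  choose! f hf1 hf2 hf3 using split_lemma I hI hBP
  have hB : ∀ s : List Bool,
      (List.foldr (fun i Z => cond i (f Z) (Z \ f Z)) X s ∉ I) ∧
      (List.foldr (fun i Z => cond i (f Z) (Z \ f Z)) X s ⊆ X) := by
    intro s
    induction s with
    | nil => exact ⟨hX, subset_rfl⟩
    | cons i s ih =>
      obtain ⟨hni, hsub⟩ := ih
      rw [List.foldr_cons]
      cases i
      · exact ⟨hf3 _ hni, Set.diff_subset.trans hsub⟩
      · exact ⟨hf2 _ hni, (hf1 _ hni).trans hsub⟩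
  refine ⟨fun s => List.foldr (fun i Z => cond i (f Z) (Z \ f Z)) X s.reverse,
    rfl, fun s => (hB _).2, fun s => (hB _).1, ?_, ?_⟩
  · intro s i
    have heq : (s ++ [i]).reverse = i :: s.reverse := by simp
    simp only [heq, List.foldr_cons]
    cases i
    · exact Set.diff_subset
    · exact hf1 _ (hB s.reverse).1
  · intro s
    have h1 : (s ++ [false]).reverse = false :: s.reverse := by simp
    have h2 : (s ++ [true]).reverse = true :: s.reverse := by simp
    simp only [h1, h2, List.foldr_cons, Bool.cond_true, Bool.cond_false]
    exact Set.diff_inter_self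
end
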